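/- In the presented group G = ⟨a, b, c, d ∣ b = cac⁻¹, c = a⁻¹ba, d = aca⁻¹, a = c⁻¹dc⟩, the relations imply G is generated by a and b alone, and G is isomorphic to ⟨a, b ∣ a⁻¹bab⁻¹ab⁻¹⟩. -/

import Mathlib

open FreeGroup in
/-- The Wirtinger relators of `⟨a, b, c, d ∣ b = cac⁻¹, c = a⁻¹ba, d = aca⁻¹,
a = c⁻¹dc⟩`, with `a, b, c, d` the generators `0, 1, 2, 3` of the free group on
four letters. -/
def wirtRels15 : Set (FreeGroup (Fin 4)) :=
  { of 1 * (of 2 * of 0 * (of 2)⁻¹)⁻¹,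
    of 2 * ((of 0)⁻¹ * of 1 * of 0)⁻¹,
    of 3 * (of 0 * of 2 * (of 0)⁻¹)⁻¹,
    of 0 * ((of 2)⁻¹ * of 3 * of 2)⁻¹ }

/-- The two-generator relator `a⁻¹ b a b⁻¹ a b⁻¹`. -/
def rel0 : FreeGroup (Fin 2) :=
  (FreeGroup.of 0)⁻¹ * FreeGroup.of 1 * FreeGroup.of 0 * (FreeGroup.of 1)⁻¹ *
    FreeGroup.of 0 * (FreeGroup.of 1)⁻¹

/-!
Tietze reduction: the relations `c = a⁻¹ba` and `d = aca⁻¹` express `c` and `d` through `a`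
and `b` (and give `d = b`). Substituting, `b = cac⁻¹` becomes the relator `a⁻¹bab⁻¹ab⁻¹`, and
`a = c⁻¹dc` becomes a consequence of it. Hence a quadruple in any group satisfies the four
Wirtinger relations iff it has the form `(a, b, a⁻¹ba, b)` with `a⁻¹bab⁻¹ab⁻¹ = 1`, and the two
presentations define isomorphic groups.
-/

open PresentedGroup

section Relations

variable {K : Type*} [Group K]

theorem wirtinger_relations_iff (a b c d : K) :
    (b = c * a * c⁻¹ ∧ c = a⁻¹ * b * a ∧ d = a * c * a⁻¹ ∧ a = c⁻¹ * d * c) ↔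
      (c = a⁻¹ * b * a ∧ d = b ∧ a⁻¹ * b * a * b⁻¹ * a * b⁻¹ = 1) := by
  have conj_b : a⁻¹ * b * a * b⁻¹ * a * b⁻¹ =
      ((a⁻¹ * b * a) * a * (a⁻¹ * b * a)⁻¹) * b⁻¹ := by group
  constructor
  · rintro ⟨hb, rfl, rfl, -⟩
    exact ⟨rfl, by group, by rw [conj_b, ← hb, mul_inv_cancel]⟩
  · rintro ⟨rfl, hd, h⟩
    subst d
    -- `a (c⁻¹ b c)⁻¹` is a conjugate of the relator
    have conj_a : a * ((a⁻¹ * b * a)⁻¹ * b * (a⁻¹ * b * a))⁻¹ =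
        (a⁻¹ * b * a)⁻¹ * (a⁻¹ * b * a * b⁻¹ * a * b⁻¹) * (a⁻¹ * b * a) := by group
    rw [h, mul_one, inv_mul_cancel, mul_inv_eq_one] at conj_a
    rw [conj_b, mul_inv_eq_one] at h
    exact ⟨h.symm, rfl, by group, conj_a⟩

theorem forall_lift_wirtRels15_iff (f : Fin 4 → K) :
    (∀ r ∈ wirtRels15, FreeGroup.lift f r = 1) ↔
      (f 1 = f 2 * f 0 * (f 2)⁻¹ ∧ f 2 = (f 0)⁻¹ * f 1 * f 0 ∧
        f 3 = f 0 * f 2 * (f 0)⁻¹ ∧ f 0 = (f 2)⁻¹ * f 3 * f 2) := by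
  simp only [wirtRels15, Set.mem_insert_iff, Set.mem_singleton_iff, forall_eq_or_imp, forall_eq,
    map_mul, map_inv, FreeGroup.lift_apply_of, mul_inv_eq_one]

theorem forall_lift_rel0_iff (f : Fin 2 → K) :
    (∀ r ∈ ({rel0} : Set (FreeGroup (Fin 2))), FreeGroup.lift f r = 1) ↔
      (f 0)⁻¹ * f 1 * f 0 * (f 1)⁻¹ * f 0 * (f 1)⁻¹ = 1 := by
  simp [rel0]

end Relations

theorem PresentedGroup.lift_of_eq_one {α : Type*} (rels : Set (FreeGroup α)) :
    ∀ r ∈ rels, FreeGroup.lift (PresentedGroup.of (rels := rels)) r = 1 := fun r hr => by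
  rw [← one_of_mem hr]
  exact (FreeGroup.lift_unique (mk rels) fun _ => rfl).symm

theorem wirtRels15_of :
    (of 2 : PresentedGroup wirtRels15) = (of 0)⁻¹ * of 1 * of 0 ∧
      (of 3 : PresentedGroup wirtRels15) = of 1 ∧
      (of 0 : PresentedGroup wirtRels15)⁻¹ * of 1 * of 0 * (of 1)⁻¹ * of 0 * (of 1)⁻¹ = 1 :=
  (wirtinger_relations_iff _ _ _ _).1 ((forall_lift_wirtRels15_iff _).1 (lift_of_eq_one _))

theorem rel0_of :
    (of 0 : PresentedGroup ({rel0} : Set (FreeGroup (Fin 2))))⁻¹ * of 1 * of 0 * (of 1)⁻¹ *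
      of 0 * (of 1)⁻¹ = 1 :=
  (forall_lift_rel0_iff _).1 (lift_of_eq_one _)

theorem closure_of_zero_one_wirtRels15 :
    Subgroup.closure ({of 0, of 1} : Set (PresentedGroup wirtRels15)) = ⊤ := by
  obtain ⟨of_two, of_three, -⟩ := wirtRels15_of
  set S := Subgroup.closure ({of 0, of 1} : Set (PresentedGroup wirtRels15))
  have h0 : of 0 ∈ S := Subgroup.subset_closure (by simp)
  have h1 : of 1 ∈ S := Subgroup.subset_closure (by simp)
  rw [eq_top_iff, ← closure_range_of, Subgroup.closure_le]
  rintro _ ⟨i, rfl⟩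
  fin_cases i
  · exact h0
  · exact h1
  · simpa [of_two] using mul_mem (mul_mem (inv_mem h0) h1) h0
  · simpa [of_three] using h1

noncomputable def wirtRels15ToRel0 :
    PresentedGroup wirtRels15 →* PresentedGroup ({rel0} : Set (FreeGroup (Fin 2))) :=
  toGroup (f := ![of 0, of 1, (of 0)⁻¹ * of 1 * of 0, of 1]) <|
    (forall_lift_wirtRels15_iff _).2 <| (wirtinger_relations_iff _ _ _ _).2 ⟨rfl, rfl, rel0_of⟩

noncomputable def rel0ToWirtRels15 :
    PresentedGroup ({rel0} : Set (FreeGroup (Fin 2))) →* PresentedGroup wirtRels15 :=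
  toGroup (f := ![of 0, of 1]) <| (forall_lift_rel0_iff _).2 wirtRels15_of.2.2

noncomputable def wirtRels15EquivRel0 :
    PresentedGroup wirtRels15 ≃* PresentedGroup ({rel0} : Set (FreeGroup (Fin 2))) :=
  wirtRels15ToRel0.toMulEquiv rel0ToWirtRels15
    (by ext i; fin_cases i <;> simp [wirtRels15ToRel0, rel0ToWirtRels15, wirtRels15_of])
    (by ext i; fin_cases i <;> simp [wirtRels15ToRel0, rel0ToWirtRels15])

/-- The group `G = ⟨a, b, c, d ∣ b = cac⁻¹, c = a⁻¹ba, d = aca⁻¹, a = c⁻¹dc⟩`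
is generated by `a` and `b` alone, and is isomorphic to
`⟨a, b ∣ a⁻¹bab⁻¹ab⁻¹⟩`. -/
theorem stmt15 :
    Subgroup.closure ({PresentedGroup.of 0, PresentedGroup.of 1} :
        Set (PresentedGroup wirtRels15)) = ⊤ ∧
    Nonempty (PresentedGroup wirtRels15 ≃*
      PresentedGroup ({rel0} : Set (FreeGroup (Fin 2)))) :=
  ⟨closure_of_zero_one_wirtRels15, ⟨wirtRels15EquivRel0⟩⟩
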